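/- Let U ⊆ ℝˡ be an open convex set and let C : U → Mₙ(ℝ) be continuously differentiable such that for every φ ∈ U, C(φ) is symmetric with eigenvalues bounded below by λ_min > 0, and such that ‖∂C/∂φⱼ(φ)‖_F ≤ M for all φ ∈ U and all j = 1, …, l. Then for all φ, φ' ∈ U: |log det C(φ) − log det C(φ')| ≤ (√n / λ_min) · M · √l · ‖φ − φ'‖₂. -/

import Mathlib

open Matrix

/-- The Euclidean norm `‖x‖₂ = √(Σᵢ xᵢ²)` of a vector `x ∈ ℝˡ`. -/
noncomputable def vnorm {l : ℕ} (x : Fin l → ℝ) : ℝ :=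
  Real.sqrt (∑ i, (x i) ^ 2)

/-- The Frobenius norm `‖A‖_F = √(tr(Aᵀ A))` of a real `n × n` matrix. -/
noncomputable def frobNorm {n : ℕ} (A : Matrix (Fin n) (Fin n) ℝ) : ℝ :=
  Real.sqrt (Matrix.trace (Aᵀ * A))

/-- The entrywise partial derivative `∂C/∂φⱼ` of a matrix-valued map
`C : ℝˡ → Mₙ(ℝ)` in the `j`-th coordinate, at the point `φ`. -/
noncomputable def partialDeriv {l n : ℕ}
    (C : (Fin l → ℝ) → Matrix (Fin n) (Fin n) ℝ) (j : Fin l) (φ : Fin l → ℝ) :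
    Matrix (Fin n) (Fin n) ℝ :=
  Matrix.of fun i k => fderiv ℝ (fun ψ => C ψ i k) φ (Pi.single j 1)

/-!
Along the segment `γ t = φ' + t • v`, `v = φ - φ'`, Jacobi's formula gives
`(log det C ∘ γ)' = tr (C⁻¹ ∑ⱼ vⱼ ∂ⱼC)`. By Cauchy–Schwarz for the Frobenius inner product each
`|tr (C⁻¹ ∂ⱼC)|` is at most `‖C⁻¹‖_F M`, and `‖C⁻¹‖_F ≤ √n / λ_min` because every column `y` of
`C⁻¹` satisfies `λ_min ‖y‖² ≤ yᵀ C y = yᵢ ≤ ‖y‖`. Cauchy–Schwarz in `ℝˡ` then bounds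
`∑ⱼ |vⱼ|` by `√l ‖v‖₂`, and the mean value inequality on `[0, 1]` concludes.
-/

theorem abs_sum_mul_le_sqrt_mul_sqrt {ι : Type*} [Fintype ι] (f g : ι → ℝ) :
    |∑ i, f i * g i| ≤ √(∑ i, f i ^ 2) * √(∑ i, g i ^ 2) := by
  refine abs_le.2 ⟨neg_le.2 ?_, Real.sum_mul_le_sqrt_mul_sqrt _ f g⟩
  simpa using Real.sum_mul_le_sqrt_mul_sqrt Finset.univ (-f) g

theorem abs_sum_mul_le_mul_vnorm {l : ℕ} (v a : Fin l → ℝ) {K : ℝ} (ha : ∀ j, |a j| ≤ K) :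
    |∑ j, v j * a j| ≤ K * √l * vnorm v := by
  rcases Nat.eq_zero_or_pos l with rfl | hl
  · simp
  have hK : 0 ≤ K := (abs_nonneg _).trans (ha ⟨0, hl⟩)
  have hsq : ∑ j, a j ^ 2 ≤ l * K ^ 2 := by
    calc ∑ j, a j ^ 2 ≤ ∑ _j : Fin l, K ^ 2 :=
          Finset.sum_le_sum fun j _ => sq_le_sq' (abs_le.1 (ha j)).1 (abs_le.1 (ha j)).2
      _ = l * K ^ 2 := by simp
  calc |∑ j, v j * a j| ≤ vnorm v * √(∑ j, a j ^ 2) := abs_sum_mul_le_sqrt_mul_sqrt v a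
    _ ≤ vnorm v * √(l * K ^ 2) :=
      mul_le_mul_of_nonneg_left (Real.sqrt_le_sqrt hsq) (Real.sqrt_nonneg _)
    _ = K * √l * vnorm v := by
      rw [Real.sqrt_mul (Nat.cast_nonneg l), Real.sqrt_sq hK]; ring

namespace Matrix

section Jacobi

variable {n : Type*} [Fintype n] [DecidableEq n]

theorem det_updateRow_eq_sum_mul_adjugate {R : Type*} [CommRing R] (A : Matrix n n R) (i : n)
    (b : n → R) : (A.updateRow i b).det = ∑ j, b j * A.adjugate j i := by
  rw [← cramer_transpose_apply, cramer_eq_adjugate_mulVec, ← adjugate_transpose]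
  simp [mulVec, dotProduct, mul_comm]

theorem sum_det_updateRow_eq_trace_adjugate_mul {R : Type*} [CommRing R] (A H : Matrix n n R) :
    ∑ i, (A.updateRow i (H i)).det = (A.adjugate * H).trace := by
  simp only [det_updateRow_eq_sum_mul_adjugate, trace, diag, mul_apply]
  rw [Finset.sum_comm]
  simp_rw [mul_comm]

noncomputable def detRowContinuousMultilinearMap :
    ContinuousMultilinearMap ℝ (fun _ : n => n → ℝ) ℝ :=
  ⟨detRowAlternating.toMultilinearMap, continuous_id.matrix_det⟩

theorem hasDerivAt_det_of_entrywise {A : ℝ → Matrix n n ℝ} {A' : Matrix n n ℝ} {t : ℝ}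
    (hA : ∀ i k, HasDerivAt (fun s => A s i k) (A' i k) t) :
    HasDerivAt (fun s => (A s).det) ((A t).adjugate * A').trace t := by
  have hrows : HasDerivAt (fun s => (A s : n → n → ℝ)) (A' : n → n → ℝ) t :=
    hasDerivAt_pi.2 fun i => hasDerivAt_pi.2 fun k => hA i k
  have := (detRowContinuousMultilinearMap.hasFDerivAt (A t : n → n → ℝ)).comp_hasDerivAt t hrows
  have hderiv : detRowContinuousMultilinearMap.linearDeriv (A t) A' =
      ((A t).adjugate * A').trace :=
    (ContinuousMultilinearMap.linearDeriv_apply _ _ _).trans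
      (sum_det_updateRow_eq_trace_adjugate_mul _ _)
  exact hderiv ▸ this

theorem hasDerivAt_log_det_of_entrywise {A : ℝ → Matrix n n ℝ} {A' : Matrix n n ℝ} {t : ℝ}
    (hA : ∀ i k, HasDerivAt (fun s => A s i k) (A' i k) t) (hdet : (A t).det ≠ 0) :
    HasDerivAt (fun s => Real.log (A s).det) ((A t)⁻¹ * A').trace t := by
  have hinv : ((A t)⁻¹ * A').trace = ((A t).adjugate * A').trace / (A t).det := by
    rw [inv_def, Ring.inverse_eq_inv', smul_mul, trace_smul, smul_eq_mul, div_eq_inv_mul]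
  exact hinv ▸ (hasDerivAt_det_of_entrywise hA).log hdet

end Jacobi

section LowerBound

variable {n : Type*} [DecidableEq n] {A : Matrix n n ℝ} {c : ℝ}

theorem posDef_of_posSemidef_sub_smul_one (hc : 0 < c) (hA : (A - c • 1).PosSemidef) :
    A.PosDef := by
  simpa using PosDef.posSemidef_add hA (PosDef.one.smul hc)

variable [Fintype n]

theorem mul_dotProduct_self_le_of_posSemidef_sub_smul_one (hA : (A - c • 1).PosSemidef)
    (x : n → ℝ) : c * (x ⬝ᵥ x) ≤ x ⬝ᵥ (A *ᵥ x) := by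
  have := hA.dotProduct_mulVec_nonneg x
  rw [star_trivial, sub_mulVec, dotProduct_sub, smul_mulVec, one_mulVec, dotProduct_smul,
    smul_eq_mul] at this
  linarith

theorem sum_sq_inv_apply_le (hc : 0 < c) (hA : (A - c • 1).PosSemidef) (i : n) :
    ∑ k, A⁻¹ k i ^ 2 ≤ 1 / c ^ 2 := by
  have hAy : A *ᵥ A⁻¹.col i = Pi.single i 1 := by
    rw [← mulVec_single_one, mulVec_mulVec,
      mul_nonsing_inv _ (posDef_of_posSemidef_sub_smul_one hc hA).det_pos.ne'.isUnit, one_mulVec]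
  have hquad := mul_dotProduct_self_le_of_posSemidef_sub_smul_one hA (A⁻¹.col i)
  rw [hAy, dotProduct_single, mul_one] at hquad
  set y := A⁻¹.col i
  change ∑ k, y k ^ 2 ≤ 1 / c ^ 2
  have hcoord : y i ^ 2 ≤ ∑ k, y k ^ 2 :=
    Finset.single_le_sum (fun k _ => sq_nonneg (y k)) (Finset.mem_univ i)
  simp only [dotProduct, ← sq] at hquad
  rw [le_div_iff₀ (by positivity)]
  rcases (Finset.sum_nonneg fun k _ => sq_nonneg (y k)).eq_or_lt with hs | hs
  · rw [← hs, zero_mul]; exact zero_le_one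
  · have := (pow_le_pow_left₀ (by positivity) hquad 2).trans hcoord
    nlinarith

end LowerBound

end Matrix

section Frobenius

variable {n : ℕ}

theorem frobNorm_eq_sqrt_sum_sq (A : Matrix (Fin n) (Fin n) ℝ) :
    frobNorm A = √(∑ j, ∑ i, A i j ^ 2) := by
  simp [frobNorm, trace, mul_apply, sq]

theorem frobNorm_transpose (A : Matrix (Fin n) (Fin n) ℝ) : frobNorm Aᵀ = frobNorm A := by
  rw [frobNorm, frobNorm, transpose_transpose, trace_mul_comm]

theorem abs_trace_mul_le_frobNorm_mul_frobNorm (B H : Matrix (Fin n) (Fin n) ℝ) :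
    |(B * H).trace| ≤ frobNorm B * frobNorm H :=
  calc |(B * H).trace| = |∑ p : Fin n × Fin n, Bᵀ p.2 p.1 * H p.2 p.1| := by
        simp [trace, mul_apply, Fintype.sum_prod_type]
    _ ≤ √(∑ p : Fin n × Fin n, Bᵀ p.2 p.1 ^ 2) * √(∑ p : Fin n × Fin n, H p.2 p.1 ^ 2) :=
        abs_sum_mul_le_sqrt_mul_sqrt _ _
    _ = frobNorm B * frobNorm H := by
        simp only [← frobNorm_transpose B, frobNorm_eq_sqrt_sum_sq, Fintype.sum_prod_type]

theorem frobNorm_inv_le {A : Matrix (Fin n) (Fin n) ℝ} {c : ℝ} (hc : 0 < c)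
    (hA : (A - c • 1).PosSemidef) : frobNorm A⁻¹ ≤ √n / c :=
  calc frobNorm A⁻¹ = √(∑ j, ∑ i, A⁻¹ i j ^ 2) := frobNorm_eq_sqrt_sum_sq _
    _ ≤ √(∑ _j : Fin n, 1 / c ^ 2) :=
        Real.sqrt_le_sqrt (Finset.sum_le_sum fun j _ => sum_sq_inv_apply_le hc hA j)
    _ = √n / c := by
        rw [Finset.sum_const, Finset.card_univ, Fintype.card_fin, nsmul_eq_mul, mul_one_div,
          Real.sqrt_div' _ (sq_nonneg c), Real.sqrt_sq hc.le]

theorem abs_trace_inv_mul_sum_smul_le {l : ℕ} {A : Matrix (Fin n) (Fin n) ℝ}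
    {H : Fin l → Matrix (Fin n) (Fin n) ℝ} {c M : ℝ} (hc : 0 < c)
    (hA : (A - c • 1).PosSemidef) (hH : ∀ j, frobNorm (H j) ≤ M) (v : Fin l → ℝ) :
    |(A⁻¹ * ∑ j, v j • H j).trace| ≤ √n / c * M * √l * vnorm v := by
  have htr : (A⁻¹ * ∑ j, v j • H j).trace = ∑ j, v j * (A⁻¹ * H j).trace := by
    simp only [Matrix.mul_sum, Matrix.mul_smul, trace_sum, trace_smul, smul_eq_mul]
  rw [htr]
  refine abs_sum_mul_le_mul_vnorm v _ fun j => ?_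
  calc |(A⁻¹ * H j).trace| ≤ frobNorm A⁻¹ * frobNorm (H j) :=
        abs_trace_mul_le_frobNorm_mul_frobNorm _ _
    _ ≤ √n / c * M :=
        mul_le_mul (frobNorm_inv_le hc hA) (hH j) (Real.sqrt_nonneg _) (by positivity)

end Frobenius

section PartialDeriv

variable {l n : ℕ}

theorem of_fderiv_apply_eq_sum_smul_partialDeriv (C : (Fin l → ℝ) → Matrix (Fin n) (Fin n) ℝ)
    (φ v : Fin l → ℝ) :
    Matrix.of (fun i k => fderiv ℝ (fun ψ => C ψ i k) φ v) = ∑ j, v j • partialDeriv C j φ := by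
  ext i k
  have hv : v = ∑ j, v j • Pi.single j 1 := by
    simp_rw [← Pi.single_smul', smul_eq_mul, mul_one, Finset.univ_sum_single]
  conv_lhs => rw [hv]
  simp only [map_sum, map_smul, Matrix.sum_apply, Matrix.smul_apply, partialDeriv, of_apply]

theorem hasDerivAt_log_det_comp_add_smul {C : (Fin l → ℝ) → Matrix (Fin n) (Fin n) ℝ}
    {x v : Fin l → ℝ} {t : ℝ} (hC : ∀ i k, DifferentiableAt ℝ (fun ψ => C ψ i k) (x + t • v))
    (hdet : (C (x + t • v)).det ≠ 0) :
    HasDerivAt (fun s => Real.log (C (x + s • v)).det)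
      ((C (x + t • v))⁻¹ * ∑ j, v j • partialDeriv C j (x + t • v)).trace t := by
  have hline : HasDerivAt (fun s : ℝ => x + s • v) v t := by
    simpa using ((hasDerivAt_id t).smul_const v).const_add x
  rw [← of_fderiv_apply_eq_sum_smul_partialDeriv]
  exact hasDerivAt_log_det_of_entrywise
    (fun i k => by exact (hC i k).hasFDerivAt.comp_hasDerivAt t hline) hdet

end PartialDeriv

theorem logDet_lipschitz_general {l n : ℕ} (U : Set (Fin l → ℝ))
    (hUopen : IsOpen U) (hUconv : Convex ℝ U)
    (C : (Fin l → ℝ) → Matrix (Fin n) (Fin n) ℝ)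
    (hC : ∀ i k, ContDiffOn ℝ 1 (fun φ => C φ i k) U)
    (lmin M : ℝ) (hl : 0 < lmin)
    (hpsd : ∀ φ ∈ U, (C φ - lmin • (1 : Matrix (Fin n) (Fin n) ℝ)).PosSemidef)
    (hM : ∀ φ ∈ U, ∀ j, frobNorm (partialDeriv C j φ) ≤ M)
    (φ φ' : Fin l → ℝ) (hφ : φ ∈ U) (hφ' : φ' ∈ U) :
    |Real.log ((C φ).det) - Real.log ((C φ').det)| ≤
      (Real.sqrt n / lmin) * M * Real.sqrt l * vnorm (φ - φ') := by
  set v := φ - φ'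
  have hseg : ∀ t ∈ Set.Icc (0 : ℝ) 1, φ' + t • v ∈ U := fun t ht =>
    hUconv.add_smul_sub_mem hφ' hφ ht
  have hderiv : ∀ t ∈ Set.Icc (0 : ℝ) 1, HasDerivAt (fun s => Real.log (C (φ' + s • v)).det)
      ((C (φ' + t • v))⁻¹ * ∑ j, v j • partialDeriv C j (φ' + t • v)).trace t := fun t ht =>
    hasDerivAt_log_det_comp_add_smul
      (fun i k => ((hC i k).differentiableOn one_ne_zero).differentiableAt
        (hUopen.mem_nhds (hseg t ht)))
      (posDef_of_posSemidef_sub_smul_one hl (hpsd _ (hseg t ht))).det_pos.ne'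
  have hbound := norm_image_sub_le_of_norm_deriv_le_segment_01'
    (fun t ht => (hderiv t ht).hasDerivWithinAt) fun t ht =>
      abs_trace_inv_mul_sum_smul_le hl (hpsd _ (hseg t (Set.Ico_subset_Icc_self ht)))
        (hM _ (hseg t (Set.Ico_subset_Icc_self ht))) v
  simpa [v] using hbound

/-- **Lipschitz bound for the log-determinant.**
If `C : U → Mₙ(ℝ)` is continuously differentiable (entrywise) on an open convex
`U ⊆ ℝˡ`, with `C(φ)` symmetric with eigenvalues bounded below by `λ_min > 0`,
and `‖∂C/∂φⱼ(φ)‖_F ≤ M` for all `φ ∈ U` and all `j`, then for all `φ, φ' ∈ U`,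
`|log det C(φ) − log det C(φ')| ≤ (√n / λ_min) · M · √l · ‖φ − φ'‖₂`. -/
theorem logDet_lipschitz {l n : ℕ} (U : Set (Fin l → ℝ))
    (hUopen : IsOpen U) (hUconv : Convex ℝ U)
    (C : (Fin l → ℝ) → Matrix (Fin n) (Fin n) ℝ)
    (hC : ∀ i k, ContDiffOn ℝ 1 (fun φ => C φ i k) U)
    (lmin M : ℝ) (hl : 0 < lmin)
    (hsymm : ∀ φ ∈ U, (C φ).IsSymm)
    (hpsd : ∀ φ ∈ U, (C φ - lmin • (1 : Matrix (Fin n) (Fin n) ℝ)).PosSemidef)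
    (hM : ∀ φ ∈ U, ∀ j, frobNorm (partialDeriv C j φ) ≤ M)
    (φ φ' : Fin l → ℝ) (hφ : φ ∈ U) (hφ' : φ' ∈ U) :
    |Real.log ((C φ).det) - Real.log ((C φ').det)| ≤
      (Real.sqrt n / lmin) * M * Real.sqrt l * vnorm (φ - φ') :=
  logDet_lipschitz_general U hUopen hUconv C hC lmin M hl hpsd hM φ φ' hφ hφ'
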